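/- Let Ps be a transition kernel and Pz an observation kernel with Pz(s', z) > 0 for all s' ∈ S and z ∈ Z. If ρ : Δ(S) → ℝ and V : Δ(S) → ℝ are both convex on Δ(S), then the one-step Bellman backup b ↦ ρ(b) + Σ_{z∈Z} η(b, z) · V(ζ(b, z)) is convex on Δ(S). -/

import Mathlib

/-! For each observation `z`, the summand `η(b, z) * V(ζ(b, z))` is the perspective
`(t, x) ↦ t * V(x / t)` of `V` evaluated at `t = η(b, z)` and `x` the unnormalised posterior, both
linear in `b`. The perspective of a convex function is jointly convex on `t > 0`, so each summand is
convex in `b`, and so is the sum with `ρ`. -/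

/-- The standard probability simplex Δ(S) of beliefs over a finite state set `S`. -/
def simplex (S : Type*) [Fintype S] : Set (S → ℝ) :=
  {b | (∀ s, 0 ≤ b s) ∧ ∑ s, b s = 1}

/-- Observation likelihood `η(b, z)` for transition kernel `Ps` and observation kernel `Pz`. -/
noncomputable def eta {S Z : Type*} [Fintype S] (Ps : S → S → ℝ) (Pz : S → Z → ℝ)
    (b : S → ℝ) (z : Z) : ℝ :=
  ∑ s', Pz s' z * ∑ s, Ps s s' * b s

/-- Bayes posterior `ζ(b, z)` for transition kernel `Ps` and observation kernel `Pz`. -/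
noncomputable def zeta {S Z : Type*} [Fintype S] (Ps : S → S → ℝ) (Pz : S → Z → ℝ)
    (b : S → ℝ) (z : Z) : S → ℝ :=
  fun s' => Pz s' z * (∑ s, Ps s s' * b s) / eta Ps Pz b z

open Finset

theorem ConvexOn.finset_sum {𝕜 E β ι : Type*} [Semiring 𝕜] [PartialOrder 𝕜] [AddCommMonoid E]
    [AddCommMonoid β] [PartialOrder β] [IsOrderedAddMonoid β] [SMul 𝕜 E] [Module 𝕜 β]
    {s : Set E} (hs : Convex 𝕜 s) (t : Finset ι) {f : ι → E → β}
    (hf : ∀ i ∈ t, ConvexOn 𝕜 s (f i)) : ConvexOn 𝕜 s fun x => ∑ i ∈ t, f i x :=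
  ⟨hs, fun _ hx _ hy _ _ ha hb hab =>
    (sum_le_sum fun i hi => (hf i hi).2 hx hy ha hb hab).trans_eq <| by
      simp only [sum_add_distrib, smul_sum]⟩

theorem ConvexOn.perspective {𝕜 E F : Type*} [Field 𝕜] [LinearOrder 𝕜] [IsStrictOrderedRing 𝕜]
    [AddCommGroup E] [Module 𝕜 E] [AddCommGroup F] [Module 𝕜 F] {C : Set F} {f : F → 𝕜}
    (hf : ConvexOn 𝕜 C f) {D : Set E} (hD : Convex 𝕜 D) (ℓ : E →ₗ[𝕜] F) (φ : E →ₗ[𝕜] 𝕜)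
    (hφ : ∀ x ∈ D, 0 < φ x) (hC : ∀ x ∈ D, (φ x)⁻¹ • ℓ x ∈ C) :
    ConvexOn 𝕜 D fun x => φ x * f ((φ x)⁻¹ • ℓ x) := by
  refine ⟨hD, fun x hx y hy a b ha hb hab => ?_⟩
  set m := a • x + b • y
  have hφx := hφ x hx
  have hφy := hφ y hy
  have hφm : 0 < φ m := hφ m (hD hx hy ha hb hab)
  have hφm_eq : φ m = a * φ x + b * φ y := by simp [m]
  have hweights : a * φ x / φ m + b * φ y / φ m = 1 := by
    rw [← add_div, ← hφm_eq, div_self hφm.ne']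
  have hmix : (φ m)⁻¹ • ℓ m = (a * φ x / φ m) • ((φ x)⁻¹ • ℓ x)
      + (b * φ y / φ m) • ((φ y)⁻¹ • ℓ y) := by
    simp only [m, map_add, map_smul, smul_smul, smul_add]
    congr 2 <;> field_simp
  have hle := hf.2 (hC x hx) (hC y hy) (div_nonneg (mul_nonneg ha hφx.le) hφm.le)
    (div_nonneg (mul_nonneg hb hφy.le) hφm.le) hweights
  rw [← hmix, smul_eq_mul, smul_eq_mul] at hle
  calc φ m * f ((φ m)⁻¹ • ℓ m)
      ≤ φ m * (a * φ x / φ m * f ((φ x)⁻¹ • ℓ x) + b * φ y / φ m * f ((φ y)⁻¹ • ℓ y)) :=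
        mul_le_mul_of_nonneg_left hle hφm.le
    _ = a • (φ x * f ((φ x)⁻¹ • ℓ x)) + b • (φ y * f ((φ y)⁻¹ • ℓ y)) := by
        simp only [smul_eq_mul]; field_simp

section Beliefs

variable {S Z : Type*} [Fintype S]

lemma convex_simplex : Convex ℝ (simplex S) :=
  convex_stdSimplex ℝ S

lemma sum_mul_pos_of_mem_simplex {p w : S → ℝ} (hp : p ∈ simplex S) (hw : ∀ s, 0 < w s) :
    0 < ∑ s, w s * p s := by
  obtain ⟨s₀, -, hs₀⟩ : ∃ s ∈ univ, (0 : ℝ) < p s :=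
    exists_lt_of_sum_lt (by simp [hp.2])
  exact sum_pos' (fun s _ => mul_nonneg (hw s).le (hp.1 s)) ⟨s₀, mem_univ _, mul_pos (hw s₀) hs₀⟩

lemma predict_mem_simplex {Ps : S → S → ℝ} (hPs0 : ∀ s s', 0 ≤ Ps s s')
    (hPs1 : ∀ s, ∑ s', Ps s s' = 1) {b : S → ℝ} (hb : b ∈ simplex S) :
    (fun s' => ∑ s, Ps s s' * b s) ∈ simplex S := by
  refine ⟨fun s' => sum_nonneg fun s _ => mul_nonneg (hPs0 s s') (hb.1 s), ?_⟩
  rw [sum_comm]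
  simp only [← sum_mul, hPs1, one_mul, hb.2]

section Bayes

variable {Ps : S → S → ℝ} {Pz : S → Z → ℝ}

lemma eta_pos (hPs0 : ∀ s s', 0 ≤ Ps s s') (hPs1 : ∀ s, ∑ s', Ps s s' = 1)
    (hPz0 : ∀ s' z, 0 < Pz s' z) {b : S → ℝ} (hb : b ∈ simplex S) (z : Z) :
    0 < eta Ps Pz b z :=
  sum_mul_pos_of_mem_simplex (predict_mem_simplex hPs0 hPs1 hb) (hPz0 · z)

lemma zeta_mem_simplex (hPs0 : ∀ s s', 0 ≤ Ps s s') (hPs1 : ∀ s, ∑ s', Ps s s' = 1)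
    (hPz0 : ∀ s' z, 0 < Pz s' z) {b : S → ℝ} (hb : b ∈ simplex S) (z : Z) :
    zeta Ps Pz b z ∈ simplex S := by
  have hη := eta_pos hPs0 hPs1 hPz0 hb z
  refine ⟨fun s' => div_nonneg (mul_nonneg (hPz0 s' z).le
    ((predict_mem_simplex hPs0 hPs1 hb).1 s')) hη.le, ?_⟩
  change ∑ s', Pz s' z * (∑ s, Ps s s' * b s) / eta Ps Pz b z = 1
  rw [← sum_div, ← eta, div_self hη.ne']

end Bayes

variable (Ps : S → S → ℝ) (Pz : S → Z → ℝ)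

def jointLikelihood (z : Z) : (S → ℝ) →ₗ[ℝ] (S → ℝ) where
  toFun b s' := Pz s' z * ∑ s, Ps s s' * b s
  map_add' b c := by ext; simp only [Pi.add_apply, mul_add, sum_add_distrib]
  map_smul' r b := by
    ext; simp only [Pi.smul_apply, smul_eq_mul, RingHom.id_apply, mul_sum]
    exact sum_congr rfl fun _ _ => by ring

def etaₗ (z : Z) : (S → ℝ) →ₗ[ℝ] ℝ :=
  ∑ s', LinearMap.proj s' ∘ₗ jointLikelihood Ps Pz z

lemma etaₗ_apply (b : S → ℝ) (z : Z) : etaₗ Ps Pz z b = eta Ps Pz b z := by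
  simp [etaₗ, jointLikelihood, eta]

lemma zeta_eq_smul_jointLikelihood (b : S → ℝ) (z : Z) :
    zeta Ps Pz b z = (eta Ps Pz b z)⁻¹ • jointLikelihood Ps Pz z b := by
  ext s'
  simp [zeta, jointLikelihood, div_eq_inv_mul]

end Beliefs

theorem bellman_backup_convexOn_general
    {S Z : Type*} [Fintype S] [Fintype Z]
    (Ps : S → S → ℝ) (Pz : S → Z → ℝ)
    (hPs0 : ∀ s s', 0 ≤ Ps s s') (hPs1 : ∀ s, ∑ s', Ps s s' = 1)
    (hPz0 : ∀ s' z, 0 < Pz s' z)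
    (ρ V : (S → ℝ) → ℝ)
    (hρ : ConvexOn ℝ (simplex S) ρ) (hV : ConvexOn ℝ (simplex S) V) :
    ConvexOn ℝ (simplex S)
      (fun b => ρ b + ∑ z, eta Ps Pz b z * V (zeta Ps Pz b z)) := by
  refine hρ.add <| ConvexOn.finset_sum convex_simplex univ fun z _ => ?_
  have h := hV.perspective convex_simplex (jointLikelihood Ps Pz z) (etaₗ Ps Pz z)
    (fun b hb => etaₗ_apply Ps Pz b z ▸ eta_pos hPs0 hPs1 hPz0 hb z)
    (fun b hb => by
      rw [etaₗ_apply, ← zeta_eq_smul_jointLikelihood]; exact zeta_mem_simplex hPs0 hPs1 hPz0 hb z)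
  simpa only [etaₗ_apply, ← zeta_eq_smul_jointLikelihood] using h

/-- If `ρ` and `V` are convex on the simplex, then the one-step Bellman backup
`b ↦ ρ(b) + ∑ z, η(b, z) * V(ζ(b, z))` is convex on the simplex. -/
theorem bellman_backup_convexOn
    {S Z : Type*} [Fintype S] [Fintype Z] [Nonempty S] [Nonempty Z]
    (Ps : S → S → ℝ) (Pz : S → Z → ℝ)
    (hPs0 : ∀ s s', 0 ≤ Ps s s') (hPs1 : ∀ s, ∑ s', Ps s s' = 1)
    (hPz0 : ∀ s' z, 0 < Pz s' z) (hPz1 : ∀ s', ∑ z, Pz s' z = 1)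
    (ρ V : (S → ℝ) → ℝ)
    (hρ : ConvexOn ℝ (simplex S) ρ) (hV : ConvexOn ℝ (simplex S) V) :
    ConvexOn ℝ (simplex S)
      (fun b => ρ b + ∑ z, eta Ps Pz b z * V (zeta Ps Pz b z)) :=
  bellman_backup_convexOn_general Ps Pz hPs0 hPs1 hPz0 ρ V hρ hV
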